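/- Let V be a k-dimensional real vector space of functions on a Cayley graph (G,S), each of polynomial growth of rate ≤ d (|u(x)| ≤ C_u(d^S(p,x)+1)^d), such that for R ≥ R₁ the bilinear form A_R(u,v) = Σ_{x∈B_p(R)} u(x)v(x) is an inner product on V. Assume β_S(n) ≥ C₁n^D and β_S(n) ≤ C₂n^D for all n ≥ 1. Then for any β > 1, δ > 0, and any R₁' ≥ R₁, there exists R > R₁' such that for every A_{βR}-orthonormal basis {u_i} of V: Σᵢ A_R(u_i,u_i) ≥ k·β^{−(2d+D+δ)}. -/

import Mathlib

noncomputable def wordDist {G : Type*} [Group G] (S : Set G) (x y : G) : ℕ :=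
  sInf {n | ∃ l : List G, l.length = n ∧ (∀ g ∈ l, g ∈ S) ∧ x * l.prod = y}

noncomputable def growth {G : Type*} [Group G] (S : Set G) (n : ℕ) : ℕ :=
  {x : G | wordDist S 1 x ≤ n}.ncard

/-- `A_R(u,v) = Σ_{x ∈ B_p(R)} u(x) v(x)`. -/
noncomputable def bilA {G : Type*} [Group G] (S : Set G) (p : G) (R : ℝ)
    (u v : G → ℝ) : ℝ :=
  ∑ᶠ x ∈ {x : G | wordDist S p x ≤ ⌊R⌋₊}, u x * v x

/-!
Fix a basis `e` of `K` and put `f R := det (A_R(e_i, e_j))`. If `u = e P` is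
`A_{βR}`-orthonormal, then `1 = (det P)² f (βR)` and `det (A_R(u_i, u_j)) = (det P)² f R`, so
AM-GM applied to the eigenvalues of the Gram matrix of `u` gives
`f R ≤ (Σᵢ A_R(u_i, u_i) / k)^k f (βR)`. If the claim failed for every `R > R₁'`, then `f` would
grow at least by the factor `β^{(2d+D+δ)k}` under every dilation `R ↦ βR`, whereas polynomial
growth of `K` and the volume bound `β_S(n) ≤ C₂ n^D` give `f R = O(R^{(2d+D)k})`.
-/

open Finset Matrix
open LinearMap (BilinForm)

theorem Real.prod_le_sum_div_card_pow {ι : Type*} (s : Finset ι) (z : ι → ℝ)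
    (hz : ∀ i ∈ s, 0 ≤ z i) : ∏ i ∈ s, z i ≤ ((∑ i ∈ s, z i) / #s) ^ #s := by
  rcases s.eq_empty_or_nonempty with rfl | hs
  · simp
  have hcard : (0 : ℝ) < #s := by exact_mod_cast hs.card_pos
  have hamgm := Real.geom_mean_le_arith_mean s (fun _ => 1) z (fun _ _ => zero_le_one)
    (by simpa using hcard) hz
  simp only [Real.rpow_one, sum_const, nsmul_eq_mul, mul_one, one_mul] at hamgm
  calc ∏ i ∈ s, z i = ((∏ i ∈ s, z i) ^ (#s : ℝ)⁻¹) ^ #s := by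
        rw [← Real.rpow_natCast, ← Real.rpow_mul (prod_nonneg hz), inv_mul_cancel₀ hcard.ne',
          Real.rpow_one]
    _ ≤ ((∑ i ∈ s, z i) / #s) ^ #s :=
        pow_le_pow_left₀ (Real.rpow_nonneg (prod_nonneg hz) _) hamgm _

namespace Matrix.PosSemidef

variable {n : Type*} [Fintype n] [DecidableEq n] {A : Matrix n n ℝ}

theorem det_le_trace_div_card_pow (hA : A.PosSemidef) :
    A.det ≤ (A.trace / Fintype.card n) ^ Fintype.card n := by
  rw [hA.isHermitian.det_eq_prod_eigenvalues, hA.isHermitian.trace_eq_sum_eigenvalues]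
  simpa using Real.prod_le_sum_div_card_pow univ _ fun i _ => hA.eigenvalues_nonneg i

theorem det_le_pow_of_trace_le (hA : A.PosSemidef) {t : ℝ}
    (ht : A.trace ≤ Fintype.card n * t) : A.det ≤ t ^ Fintype.card n := by
  rcases isEmpty_or_nonempty n with hn | hn
  · simp
  refine hA.det_le_trace_div_card_pow.trans (pow_le_pow_left₀ ?_ ?_ _)
  · exact div_nonneg hA.trace_nonneg (Nat.cast_nonneg _)
  · rwa [div_le_iff₀' (by exact_mod_cast Fintype.card_pos)]

end Matrix.PosSemidef

namespace LinearMap.BilinForm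

variable {R M ι κ : Type*}

section CommSemiring

variable [CommSemiring R] [AddCommMonoid M] [Module R M]

def gramMatrix (B : BilinForm R M) (v : ι → M) : Matrix ι ι R :=
  Matrix.of fun i j => B (v i) (v j)

@[simp]
theorem gramMatrix_apply (B : BilinForm R M) (v : ι → M) (i j : ι) :
    gramMatrix B v i j = B (v i) (v j) := rfl

theorem gramMatrix_sum_smul [Fintype ι] (B : BilinForm R M) (v : ι → M) (P : Matrix ι κ R) :
    gramMatrix B (fun j => ∑ i, P i j • v i) = Pᵀ * gramMatrix B v * P := by
  ext a b
  simp only [gramMatrix_apply, map_sum, map_smul, LinearMap.sum_apply, LinearMap.smul_apply,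
    smul_eq_mul, mul_apply, transpose_apply, sum_mul, mul_sum]
  exact sum_congr rfl fun i _ => sum_congr rfl fun j _ => by ring

theorem dotProduct_gramMatrix_mulVec [Fintype ι] (B : BilinForm R M) (v : ι → M) (x : ι → R) :
    x ⬝ᵥ gramMatrix B v *ᵥ x = B (∑ i, x i • v i) (∑ i, x i • v i) := by
  simp only [dotProduct, mulVec, gramMatrix_apply, map_sum, map_smul, LinearMap.sum_apply,
    LinearMap.smul_apply, smul_eq_mul, mul_sum]
  rw [sum_comm]
  exact sum_congr rfl fun i _ => sum_congr rfl fun j _ => by ring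

end CommSemiring

variable [AddCommGroup M] [Module ℝ M] {B : BilinForm ℝ M}

theorem IsSymm.isHermitian_gramMatrix (hB : B.IsSymm) (v : ι → M) :
    (gramMatrix B v).IsHermitian :=
  IsHermitian.ext fun i j => by simp [hB.eq (v j) (v i)]

theorem IsPosSemidef.posSemidef_gramMatrix [Fintype ι] (hB : B.IsPosSemidef) (v : ι → M) :
    (gramMatrix B v).PosSemidef :=
  posSemidef_iff_dotProduct_mulVec.mpr ⟨hB.isSymm.isHermitian_gramMatrix v, fun x => by
    rw [star_trivial, dotProduct_gramMatrix_mulVec]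
    exact hB.isNonneg.nonneg _⟩

theorem posDef_gramMatrix [Fintype ι] (hB : B.IsSymm) {W : Submodule ℝ M}
    (hpos : ∀ w ∈ W, w ≠ 0 → 0 < B w w) {v : ι → M} (hvW : ∀ i, v i ∈ W)
    (hv : LinearIndependent ℝ v) : (gramMatrix B v).PosDef := by
  refine posDef_iff_dotProduct_mulVec.mpr ⟨hB.isHermitian_gramMatrix v, fun x hx => ?_⟩
  rw [star_trivial, dotProduct_gramMatrix_mulVec]
  refine hpos _ (W.sum_mem fun i _ => W.smul_mem _ (hvW i)) fun h => hx ?_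
  exact funext (Fintype.linearIndependent_iff.mp hv x h)

theorem IsPosSemidef.det_gramMatrix_le_pow [Fintype ι] [DecidableEq ι] (hB : B.IsPosSemidef)
    (v : ι → M) {c : ℝ} (hc : ∀ i, B (v i) (v i) ≤ c) :
    (gramMatrix B v).det ≤ c ^ Fintype.card ι :=
  (hB.posSemidef_gramMatrix v).det_le_pow_of_trace_le <| by
    simpa [Matrix.trace] using sum_le_card_nsmul univ _ c fun i _ => hc i

theorem det_gramMatrix_le_of_orthonormal [Fintype ι] [DecidableEq ι] {W : Submodule ℝ M}
    (b : Module.Basis ι ℝ W) {B₁ B₂ : BilinForm ℝ M} (hB₁ : B₁.IsPosSemidef) {u : ι → M}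
    (huW : ∀ i, u i ∈ W) (hu : ∀ i j, B₂ (u i) (u j) = if i = j then 1 else 0) {t : ℝ}
    (ht : ∑ i, B₁ (u i) (u i) ≤ Fintype.card ι * t) :
    (gramMatrix B₁ fun i => (b i : M)).det ≤
      t ^ Fintype.card ι * (gramMatrix B₂ fun i => (b i : M)).det := by
  set P := b.toMatrix fun j => (⟨u j, huW j⟩ : W)
  have hP : (fun j => ∑ i, P i j • (b i : M)) = u := funext fun j => by
    simpa only [Submodule.coe_sum, Submodule.coe_smul] using
      congrArg Subtype.val (b.sum_toMatrix_smul_self _ j)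
  have hdet (B : BilinForm ℝ M) :
      (gramMatrix B u).det = P.det ^ 2 * (gramMatrix B fun i => (b i : M)).det := by
    rw [← hP, gramMatrix_sum_smul, det_mul, det_mul, det_transpose]
    ring
  have h₂ : P.det ^ 2 * (gramMatrix B₂ fun i => (b i : M)).det = 1 := by
    rw [← hdet, ← det_one (n := ι)]
    congr 1
    ext i j
    rw [gramMatrix_apply, hu, one_apply]
  have h₂pos : 0 < (gramMatrix B₂ fun i => (b i : M)).det :=
    pos_of_mul_pos_right (h₂ ▸ one_pos) (sq_nonneg _)
  have htr : (gramMatrix B₁ u).trace ≤ Fintype.card ι * t := by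
    simpa only [Matrix.trace, Matrix.diag, gramMatrix_apply] using ht
  calc (gramMatrix B₁ fun i => (b i : M)).det
      = (gramMatrix B₁ u).det * (gramMatrix B₂ fun i => (b i : M)).det := by
        rw [hdet]
        linear_combination (-(gramMatrix B₁ fun i => (b i : M)).det) * h₂
    _ ≤ _ := mul_le_mul_of_nonneg_right
        ((hB₁.posSemidef_gramMatrix u).det_le_pow_of_trace_le htr) h₂pos.le

end LinearMap.BilinForm

open LinearMap.BilinForm

theorem le_of_pow_mul_le_mul_pow {q r c B : ℝ} (hc : 0 < c) (hr : 0 < r)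
    (h : ∀ m : ℕ, q ^ m * c ≤ B * r ^ m) : q ≤ r := by
  by_contra! hrq
  obtain ⟨m, hm⟩ := pow_unbounded_of_one_lt (B / c) ((one_lt_div hr).mpr hrq)
  rw [div_pow, div_lt_div_iff₀ hc (pow_pos hr m)] at hm
  linarith [h m]

theorem le_of_dilation_bounds {f : ℝ → ℝ} {β a b B R₀ : ℝ} (hβ : 1 < β) (hR₀ : 0 < R₀)
    (hf₀ : 0 < f R₀) (hdil : ∀ R, R₀ ≤ R → β ^ a * f R ≤ f (β * R))
    (hbound : ∀ R, R₀ ≤ R → f R ≤ B * R ^ b) : a ≤ b := by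
  have hβ₀ : 0 < β := one_pos.trans hβ
  have hR (m : ℕ) : R₀ ≤ β ^ m * R₀ := le_mul_of_one_le_left hR₀.le (one_le_pow₀ hβ.le)
  have hlower (m : ℕ) : (β ^ a) ^ m * f R₀ ≤ f (β ^ m * R₀) := by
    induction m with
    | zero => simp
    | succ m ih =>
      calc (β ^ a) ^ (m + 1) * f R₀ = β ^ a * ((β ^ a) ^ m * f R₀) := by ring
        _ ≤ β ^ a * f (β ^ m * R₀) := by gcongr
        _ ≤ f (β * (β ^ m * R₀)) := hdil _ (hR m)
        _ = f (β ^ (m + 1) * R₀) := by rw [pow_succ', mul_assoc]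
  have hupper (m : ℕ) : f (β ^ m * R₀) ≤ B * R₀ ^ b * (β ^ b) ^ m :=
    calc f (β ^ m * R₀) ≤ B * (β ^ m * R₀) ^ b := hbound _ (hR m)
      _ = B * R₀ ^ b * (β ^ b) ^ m := by
        rw [Real.mul_rpow (by positivity) hR₀.le, Real.rpow_pow_comm hβ₀.le]
        ring
  have := le_of_pow_mul_le_mul_pow hf₀ (by positivity) fun m => (hlower m).trans (hupper m)
  exact (Real.rpow_le_rpow_left_iff hβ).mp this

theorem exists_forall_abs_le_mul {ι X : Type*} [Finite ι] {f : ι → X → ℝ} {w : X → ℝ}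
    (hw : ∀ x, 0 ≤ w x) (h : ∀ i, ∃ C, ∀ x, |f i x| ≤ C * w x) :
    ∃ C, ∀ i x, |f i x| ≤ C * w x := by
  cases nonempty_fintype ι
  choose C hC using h
  refine ⟨∑ i, |C i|, fun i x => (hC i x).trans ?_⟩
  gcongr
  · exact hw x
  · exact (le_abs_self _).trans (single_le_sum (fun j _ => abs_nonneg (C j)) (mem_univ i))

section WordMetric

variable {G : Type*} [Group G] {S : Set G}

theorem wordDist_mul_left (g x y : G) : wordDist S (g * x) (g * y) = wordDist S x y := by
  simp only [wordDist, mul_assoc, mul_right_inj]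

theorem exists_length_eq_wordDist (hSsym : ∀ s ∈ S, s⁻¹ ∈ S) (hSgen : Subgroup.closure S = ⊤)
    (x y : G) : ∃ l : List G, l.length = wordDist S x y ∧ (∀ g ∈ l, g ∈ S) ∧ x * l.prod = y := by
  have hmem : x⁻¹ * y ∈ Submonoid.closure S := by
    have h : x⁻¹ * y ∈ (Subgroup.closure S).toSubmonoid := hSgen ▸ Subgroup.mem_top _
    rwa [Subgroup.closure_toSubmonoid,
      Set.union_eq_left.mpr fun s hs => by simpa using hSsym _ (Set.mem_inv.mp hs)] at h
  obtain ⟨l, hlS, hl⟩ := Submonoid.exists_list_of_mem_closure hmem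
  have hne : {n | ∃ l : List G, l.length = n ∧ (∀ g ∈ l, g ∈ S) ∧ x * l.prod = y}.Nonempty :=
    ⟨l.length, l, rfl, hlS, by rw [hl, mul_inv_cancel_left]⟩
  exact Nat.sInf_mem hne

theorem finite_setOf_wordDist_le (hSfin : S.Finite) (hSsym : ∀ s ∈ S, s⁻¹ ∈ S)
    (hSgen : Subgroup.closure S = ⊤) (x : G) (n : ℕ) : {y | wordDist S x y ≤ n}.Finite := by
  have : Finite S := hSfin
  refine ((List.finite_length_le S n).image fun l => x * (l.map Subtype.val).prod).subset
    fun y hy => ?_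
  obtain ⟨l, hlen, hlS, rfl⟩ := exists_length_eq_wordDist hSsym hSgen x y
  exact ⟨l.attach.map fun g => (⟨g.1, hlS _ g.2⟩ : S), by simpa [hlen] using hy, by simp⟩

theorem ncard_setOf_wordDist_le (p : G) (n : ℕ) :
    {y | wordDist S p y ≤ n}.ncard = growth S n := by
  have hball : {y | wordDist S p y ≤ n} = (p * ·) '' {y | wordDist S 1 y ≤ n} := by
    ext y
    rw [Set.image_mul_left]
    show wordDist S p y ≤ n ↔ wordDist S 1 (p⁻¹ * y) ≤ n
    rw [← wordDist_mul_left p 1, mul_one, mul_inv_cancel_left]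
  rw [hball, Set.ncard_image_of_injective _ (mul_right_injective p), growth]

end WordMetric

def sumMulForm {X : Type*} (T : Finset X) : BilinForm ℝ (X → ℝ) :=
  ∑ x ∈ T, (LinearMap.mul ℝ ℝ).compl₁₂ (LinearMap.proj x) (LinearMap.proj x)

@[simp]
theorem sumMulForm_apply {X : Type*} (T : Finset X) (u v : X → ℝ) :
    sumMulForm T u v = ∑ x ∈ T, u x * v x := by
  simp [sumMulForm, LinearMap.sum_apply]

theorem isPosSemidef_sumMulForm {X : Type*} (T : Finset X) : (sumMulForm T).IsPosSemidef :=
  ⟨⟨fun u v => by simp [mul_comm]⟩,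
    ⟨fun u => by simpa using sum_nonneg fun x _ => mul_self_nonneg (u x)⟩⟩

section Ball

variable {G : Type*} [Group G] {S : Set G} {p : G}

noncomputable def ballForm (hball : ∀ n : ℕ, {x | wordDist S p x ≤ n}.Finite) (R : ℝ) :
    BilinForm ℝ (G → ℝ) :=
  sumMulForm (hball ⌊R⌋₊).toFinset

variable (hball : ∀ n : ℕ, {x | wordDist S p x ≤ n}.Finite)
include hball

theorem ballForm_apply (R : ℝ) (u v : G → ℝ) : ballForm hball R u v = bilA S p R u v := by
  rw [ballForm, bilA, finsum_mem_eq_finite_toFinset_sum _ (hball _), sumMulForm_apply]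

theorem isPosSemidef_ballForm (R : ℝ) : (ballForm hball R).IsPosSemidef :=
  isPosSemidef_sumMulForm _

theorem ballForm_self_le {d C R : ℝ} (hd : 0 ≤ d) (hR : 0 ≤ R) {u : G → ℝ}
    (hu : ∀ x, |u x| ≤ C * ((wordDist S p x : ℝ) + 1) ^ d) :
    ballForm hball R u u ≤ growth S ⌊R⌋₊ * (C * (R + 1) ^ d) ^ 2 := by
  have hC : 0 ≤ C := nonneg_of_mul_nonneg_left ((abs_nonneg _).trans (hu p)) (by positivity)
  rw [ballForm, sumMulForm_apply, ← ncard_setOf_wordDist_le p,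
    Set.ncard_eq_toFinset_card _ (hball _), ← nsmul_eq_mul]
  refine sum_le_card_nsmul _ _ _ fun x hx => ?_
  have hxR : (wordDist S p x : ℝ) ≤ R :=
    (Nat.cast_le.mpr (by simpa using hx)).trans (Nat.floor_le hR)
  rw [← abs_mul_abs_self, ← sq]
  gcongr
  exact (hu x).trans (by gcongr)

theorem ballForm_self_le_mul_rpow {D : ℕ} {C₂ : ℝ}
    (hup : ∀ n : ℕ, 1 ≤ n → (growth S n : ℝ) ≤ C₂ * (n : ℝ) ^ D) {d C R : ℝ} (hd : 0 ≤ d)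
    (hR : 1 ≤ R) {u : G → ℝ} (hu : ∀ x, |u x| ≤ C * ((wordDist S p x : ℝ) + 1) ^ d) :
    ballForm hball R u u ≤ C₂ * (2 ^ d * C) ^ 2 * R ^ (2 * d + D) := by
  have hR₀ : 0 < R := one_pos.trans_le hR
  have hC : 0 ≤ C := nonneg_of_mul_nonneg_left ((abs_nonneg _).trans (hu p)) (by positivity)
  have hC₂ : 0 ≤ C₂ := by simpa using (Nat.cast_nonneg _).trans (hup 1 le_rfl)
  have hgrowth : (growth S ⌊R⌋₊ : ℝ) ≤ C₂ * R ^ D :=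
    (hup _ (Nat.le_floor (by exact_mod_cast hR))).trans (by gcongr; exact Nat.floor_le hR₀.le)
  calc ballForm hball R u u ≤ growth S ⌊R⌋₊ * (C * (R + 1) ^ d) ^ 2 :=
        ballForm_self_le hball hd hR₀.le hu
    _ ≤ C₂ * R ^ D * (C * (2 * R) ^ d) ^ 2 := by gcongr; linarith
    _ = C₂ * (2 ^ d * C) ^ 2 * R ^ (2 * d + D) := by
        rw [Real.mul_rpow zero_le_two hR₀.le, Real.rpow_add hR₀, Real.rpow_natCast, two_mul,
          Real.rpow_add hR₀]
        ring

theorem det_gramMatrix_ballForm_le {D : ℕ} {C₂ : ℝ}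
    (hup : ∀ n : ℕ, 1 ≤ n → (growth S n : ℝ) ≤ C₂ * (n : ℝ) ^ D) {d C R : ℝ} (hd : 0 ≤ d)
    (hR : 1 ≤ R) {k : ℕ} {e : Fin k → G → ℝ}
    (he : ∀ i x, |e i x| ≤ C * ((wordDist S p x : ℝ) + 1) ^ d) :
    (gramMatrix (ballForm hball R) e).det ≤
      (C₂ * (2 ^ d * C) ^ 2) ^ k * R ^ ((2 * d + D) * k) :=
  calc (gramMatrix (ballForm hball R) e).det
      ≤ (C₂ * (2 ^ d * C) ^ 2 * R ^ (2 * d + D)) ^ k := by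
        simpa only [Fintype.card_fin] using (isPosSemidef_ballForm hball R).det_gramMatrix_le_pow e
          fun i => ballForm_self_le_mul_rpow hball hup hd hR (he i)
    _ = (C₂ * (2 ^ d * C) ^ 2) ^ k * R ^ ((2 * d + D) * k) := by
        rw [mul_pow, ← Real.rpow_natCast (R ^ _), ← Real.rpow_mul (by linarith)]

end Ball

theorem lower_bound_for_orthonormal_basis_general {G : Type*} [Group G]
    (S : Set G) (hSfin : S.Finite) (hSsym : ∀ s ∈ S, s⁻¹ ∈ S)
    (hSgen : Subgroup.closure S = ⊤) (p : G)
    (D : ℕ) (C₂ : ℝ)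
    (hup : ∀ n : ℕ, 1 ≤ n → (growth S n : ℝ) ≤ C₂ * (n : ℝ) ^ D)
    (d : ℝ) (hd : 0 ≤ d)
    (K : Submodule ℝ (G → ℝ)) [FiniteDimensional ℝ K] (k : ℕ) (hk : 1 ≤ k)
    (hdim : Module.finrank ℝ K = k)
    (hgrowth : ∀ u ∈ K, ∃ Cu : ℝ, ∀ x : G,
      |u x| ≤ Cu * ((wordDist S p x : ℝ) + 1) ^ d)
    (R₁ : ℝ)
    (hinner : ∀ R : ℝ, R₁ ≤ R → ∀ u ∈ K, u ≠ 0 → 0 < bilA S p R u u) :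
    ∀ (β δ R₁' : ℝ), 1 < β → 0 < δ → R₁ ≤ R₁' →
      ∃ R : ℝ, R₁' < R ∧ ∀ u : Fin k → G → ℝ,
        (∀ i, u i ∈ K) →
        (∀ i j, bilA S p (β * R) (u i) (u j) = if i = j then 1 else 0) →
        (k : ℝ) * β ^ (-(2 * d + (D : ℝ) + δ)) ≤ ∑ i, bilA S p R (u i) (u i) := by
  intro β δ R₁' hβ hδ hR₁'
  by_contra! hcon
  have hβ₀ : 0 < β := one_pos.trans hβ
  have hball := finite_setOf_wordDist_le hSfin hSsym hSgen p
  let b := Module.finBasisOfFinrankEq ℝ K hdim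
  let f (R : ℝ) : ℝ := (gramMatrix (ballForm hball R) fun i => (b i : G → ℝ)).det
  set R₀ := max (R₁' + 1) 1
  have hR₀ : R₁' + 1 ≤ R₀ ∧ 1 ≤ R₀ := ⟨le_max_left _ _, le_max_right _ _⟩
  have hf₀ : 0 < f R₀ := by
    refine (posDef_gramMatrix (isPosSemidef_ballForm hball R₀).isSymm (W := K)
      (fun w hw hw0 => ?_) (fun i => (b i).2)
      (b.linearIndependent.map' K.subtype K.ker_subtype)).det_pos
    rw [ballForm_apply]
    exact hinner R₀ (by linarith) w hw hw0
  have hdil (R : ℝ) (hR : R₀ ≤ R) : β ^ ((2 * d + D + δ) * k) * f R ≤ f (β * R) := by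
    obtain ⟨u, huK, hu, htr⟩ := hcon R (by linarith)
    have h := det_gramMatrix_le_of_orthonormal b (isPosSemidef_ballForm hball R) huK
      (B₂ := ballForm hball (β * R)) (by simpa only [ballForm_apply] using hu)
      (t := β ^ (-(2 * d + D + δ))) (by simpa only [ballForm_apply, Fintype.card_fin] using htr.le)
    rwa [Fintype.card_fin, ← Real.rpow_natCast, ← Real.rpow_mul hβ₀.le, neg_mul,
      Real.rpow_neg hβ₀.le, inv_mul_eq_div, le_div_iff₀' (by positivity)] at h
  obtain ⟨C, hC⟩ := exists_forall_abs_le_mul (fun x => by positivity) fun i => hgrowth _ (b i).2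
  have := le_of_dilation_bounds hβ (by linarith) hf₀ hdil fun R hR =>
    det_gramMatrix_ballForm_le hball hup hd (by linarith) hC
  nlinarith [mul_pos hδ (show (0 : ℝ) < k by exact_mod_cast hk)]

theorem lower_bound_for_orthonormal_basis {G : Type*} [Group G]
    (S : Set G) (hSfin : S.Finite) (hSsym : ∀ s ∈ S, s⁻¹ ∈ S)
    (hSgen : Subgroup.closure S = ⊤) (p : G)
    (D : ℕ) (C₁ C₂ : ℝ) (hC₁ : 0 < C₁) (hC₂ : 0 < C₂)
    (hlow : ∀ n : ℕ, 1 ≤ n → C₁ * (n : ℝ) ^ D ≤ (growth S n : ℝ))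
    (hup : ∀ n : ℕ, 1 ≤ n → (growth S n : ℝ) ≤ C₂ * (n : ℝ) ^ D)
    (d : ℝ) (hd : 0 ≤ d)
    (K : Submodule ℝ (G → ℝ)) [FiniteDimensional ℝ K] (k : ℕ) (hk : 1 ≤ k)
    (hdim : Module.finrank ℝ K = k)
    (hgrowth : ∀ u ∈ K, ∃ Cu : ℝ, ∀ x : G,
      |u x| ≤ Cu * ((wordDist S p x : ℝ) + 1) ^ d)
    (R₁ : ℝ) (hR₁ : 1 ≤ R₁)
    (hinner : ∀ R : ℝ, R₁ ≤ R → ∀ u ∈ K, u ≠ 0 → 0 < bilA S p R u u) :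
    ∀ (β δ R₁' : ℝ), 1 < β → 0 < δ → R₁ ≤ R₁' →
      ∃ R : ℝ, R₁' < R ∧ ∀ u : Fin k → G → ℝ,
        (∀ i, u i ∈ K) →
        (∀ i j, bilA S p (β * R) (u i) (u j) = if i = j then 1 else 0) →
        (k : ℝ) * β ^ (-(2 * d + (D : ℝ) + δ)) ≤ ∑ i, bilA S p R (u i) (u i) :=
  lower_bound_for_orthonormal_basis_general S hSfin hSsym hSgen p D C₂ hup d hd K k hk hdim hgrowth
    R₁ hinner
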